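/- arXiv:2605.07350 — 2 statements merged into one kernel-verified Lean document; each statement's English description precedes it below -/
import Mathlib

section
/- Let c > 0 and let v : ℝ → ℝ be continuously differentiable with v(x) > 0 for all x, and suppose there exists y ∈ ℝ with v(y) ≤ c. Then for every x ∈ ℝ, (max(v(x) − c, 0))² ≤ (∫_ℝ v(z)·1_{v(z)≥c} dz) · (∫_ℝ (v′(z))²/v(z) · 1_{v(z)≥c} dz), where 1_{v≥c} equals 1 where v ≥ c and 0 otherwise (and the inequality is trivially true if either integral is infinite). -/
/-!
If `v x > c`, continuity and `v y ≤ c` give a point `ξ` with `v ξ = c` such that `v ≥ c` on the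
whole interval between `ξ` and `x`. By the fundamental theorem of calculus,
`v x - c = ∫_ξ^x v'`, and writing `|v'| = √v · (|v'| / √v)` the Cauchy–Schwarz inequality
bounds its square by `(∫ v) (∫ v'² / v)` over that interval, where `1_{v ≥ c} = 1`.
-/

open MeasureTheory Set
open scoped Interval

theorem Continuous.exists_eq_forall_Icc_le {v : ℝ → ℝ} (hv : Continuous v) {c x y : ℝ}
    (hyx : y ≤ x) (hy : v y ≤ c) (hx : c ≤ v x) :
    ∃ ξ ∈ Icc y x, v ξ = c ∧ ∀ z ∈ Icc ξ x, c ≤ v z := by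
  set S := Icc y x ∩ v ⁻¹' {c}
  have hS : IsCompact S := isCompact_Icc.inter_right (isClosed_singleton.preimage hv)
  have hS_ne : S.Nonempty := intermediate_value_Icc hyx hv.continuousOn ⟨hy, hx⟩
  have hlast : sSup S ∈ S := hS.sSup_mem hS_ne
  refine ⟨sSup S, hlast.1, hlast.2, fun z hz => ?_⟩
  by_contra! hvz
  -- a crossing of the level `c` to the right of `z` would lie beyond `sSup S`
  obtain ⟨w, hw, hvw⟩ := intermediate_value_Icc hz.2 hv.continuousOn ⟨hvz.le, hx⟩
  have hwS : w ∈ S := ⟨⟨hlast.1.1.trans (hz.1.trans hw.1), hw.2⟩, hvw⟩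
  have hzξ : z = sSup S := le_antisymm (hw.1.trans (le_csSup hS.bddAbove hwS)) hz.1
  exact hvz.ne (hzξ ▸ hlast.2)

theorem Continuous.exists_eq_forall_uIcc_le {v : ℝ → ℝ} (hv : Continuous v) {c x y : ℝ}
    (hy : v y ≤ c) (hx : c ≤ v x) :
    ∃ ξ, v ξ = c ∧ ∀ z ∈ [[ξ, x]], c ≤ v z := by
  rcases le_total y x with hyx | hxy
  · obtain ⟨ξ, hξ, hvξ, hle⟩ := hv.exists_eq_forall_Icc_le hyx hy hx
    exact ⟨ξ, hvξ, by rwa [uIcc_of_le hξ.2]⟩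
  · have hv' : Continuous fun z => v (-z) := hv.comp continuous_neg
    obtain ⟨ξ, hξ, hvξ, hle⟩ := hv'.exists_eq_forall_Icc_le (neg_le_neg hxy)
      (by simpa using hy) (by simpa using hx)
    refine ⟨-ξ, hvξ, fun z hz => ?_⟩
    rw [uIcc_of_ge (le_neg_of_le_neg hξ.2)] at hz
    simpa using hle (-z) ⟨le_neg_of_le_neg hz.2, neg_le_neg hz.1⟩

theorem ContDiff.enorm_sub_le_lintegral_enorm_deriv {E : Type*} [NormedAddCommGroup E]
    [NormedSpace ℝ E] [CompleteSpace E] {f : ℝ → E} (hf : ContDiff ℝ 1 f) (a b : ℝ) :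
    ‖f b - f a‖ₑ ≤ ∫⁻ z in Ι a b, ‖deriv f z‖ₑ := by
  have hftc : ∫ z in a..b, deriv f z = f b - f a :=
    intervalIntegral.integral_deriv_eq_sub (fun z _ => hf.differentiable one_ne_zero z)
      ((hf.continuous_deriv le_rfl).intervalIntegrable a b)
  rw [← hftc, ← ofReal_norm, intervalIntegral.norm_integral_eq_norm_integral_uIoc, ofReal_norm]
  exact enorm_integral_le_lintegral_enorm _

theorem ENNReal.sq_lintegral_sqrt_mul_le {α : Type*} [MeasurableSpace α] {μ : Measure α}
    {f g : α → ENNReal} (hf : AEMeasurable f μ) (hg : AEMeasurable g μ) :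
    (∫⁻ a, (f a * g a) ^ (1 / 2 : ℝ) ∂μ) ^ 2 ≤ (∫⁻ a, f a ∂μ) * ∫⁻ a, g a ∂μ := by
  have holder := ENNReal.lintegral_mul_norm_pow_le hf hg (p := 1 / 2) (q := 1 / 2)
    (by norm_num) (by norm_num) (by norm_num)
  simp_rw [← ENNReal.mul_rpow_of_nonneg _ _ (by norm_num : (0 : ℝ) ≤ 1 / 2)] at holder
  calc _ ≤ (((∫⁻ a, f a ∂μ) * ∫⁻ a, g a ∂μ) ^ (1 / 2 : ℝ)) ^ 2 := by gcongr
    _ = _ := by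
      rw [← ENNReal.rpow_natCast, ← ENNReal.rpow_mul]
      norm_num

theorem sq_lintegral_enorm_le_lintegral_mul_lintegral_sq_div {α : Type*} [MeasurableSpace α]
    {μ : Measure α} {f g : α → ℝ} (hf : AEMeasurable f μ) (hg : AEMeasurable g μ)
    (hpos : ∀ a, 0 < f a) :
    (∫⁻ a, ‖g a‖ₑ ∂μ) ^ 2
      ≤ (∫⁻ a, ENNReal.ofReal (f a) ∂μ) * ∫⁻ a, ENNReal.ofReal (g a ^ 2 / f a) ∂μ := by
  have hsplit : ∀ a, ‖g a‖ₑ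
      = (ENNReal.ofReal (f a) * ENNReal.ofReal (g a ^ 2 / f a)) ^ (1 / 2 : ℝ) := by
    intro a
    rw [← ENNReal.ofReal_mul (hpos a).le, mul_div_cancel₀ _ (hpos a).ne',
      ENNReal.ofReal_rpow_of_nonneg (sq_nonneg _) (by norm_num), ← Real.sqrt_eq_rpow,
      Real.sqrt_sq_eq_abs, ← Real.norm_eq_abs, ofReal_norm]
  simp_rw [hsplit]
  exact ENNReal.sq_lintegral_sqrt_mul_le hf.ennreal_ofReal
    ((hg.pow_const 2).div hf).ennreal_ofReal

theorem pointwise_Linfty_estimate_general (c : ℝ) (v : ℝ → ℝ)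
    (hv : ContDiff ℝ 1 v) (hpos : ∀ x, 0 < v x) (hy : ∃ y : ℝ, v y ≤ c) :
    ∀ x : ℝ,
      ENNReal.ofReal ((max (v x - c) 0) ^ 2)
        ≤ (∫⁻ z : ℝ, ENNReal.ofReal (if c ≤ v z then v z else 0))
          * (∫⁻ z : ℝ, ENNReal.ofReal
              (if c ≤ v z then (deriv v z) ^ 2 / v z else 0)) := by
  intro x
  rcases le_total (v x) c with hxc | hcx
  · simp [max_eq_right (sub_nonpos.2 hxc)]
  obtain ⟨y, hyc⟩ := hy
  obtain ⟨ξ, hvξ, hle⟩ := hv.continuous.exists_eq_forall_uIcc_le hyc hcx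
  have restrict_le (F : ℝ → ℝ) :
      ∫⁻ z in Ι ξ x, ENNReal.ofReal (F z) ≤ ∫⁻ z, ENNReal.ofReal (if c ≤ v z then F z else 0) :=
    (setLIntegral_mono' measurableSet_uIoc fun z hz => by
      rw [if_pos (hle z (uIoc_subset_uIcc hz))]).trans (setLIntegral_le_lintegral _ _)
  calc ENNReal.ofReal ((max (v x - c) 0) ^ 2) = ‖v x - v ξ‖ₑ ^ 2 := by
        rw [hvξ, max_eq_left (sub_nonneg.2 hcx), ENNReal.ofReal_pow (sub_nonneg.2 hcx),
          Real.enorm_eq_ofReal (sub_nonneg.2 hcx)]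
    _ ≤ (∫⁻ z in Ι ξ x, ‖deriv v z‖ₑ) ^ 2 := by
        gcongr
        exact hv.enorm_sub_le_lintegral_enorm_deriv ξ x
    _ ≤ (∫⁻ z in Ι ξ x, ENNReal.ofReal (v z))
          * ∫⁻ z in Ι ξ x, ENNReal.ofReal (deriv v z ^ 2 / v z) :=
        sq_lintegral_enorm_le_lintegral_mul_lintegral_sq_div hv.continuous.aemeasurable
          (hv.continuous_deriv le_rfl).aemeasurable hpos
    _ ≤ _ := mul_le_mul' (restrict_le v) (restrict_le fun z => deriv v z ^ 2 / v z)

/-- pointwise `L^∞` estimate from the fundamental theorem of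
calculus and Cauchy–Schwarz: if `v` is `C¹`, positive, and `v(y) ≤ c` somewhere,
then `((v(x)−c)₊)² ≤ (∫ v 1_{v≥c}) (∫ (v′)²/v · 1_{v≥c})` for every `x`
(stated with lower integrals so that it is trivially true if either integral
is infinite). -/
theorem pointwise_Linfty_estimate (c : ℝ) (hc : 0 < c) (v : ℝ → ℝ)
    (hv : ContDiff ℝ 1 v) (hpos : ∀ x, 0 < v x) (hy : ∃ y : ℝ, v y ≤ c) :
    ∀ x : ℝ,
      ENNReal.ofReal ((max (v x - c) 0) ^ 2)
        ≤ (∫⁻ z : ℝ, ENNReal.ofReal (if c ≤ v z then v z else 0))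
          * (∫⁻ z : ℝ, ENNReal.ofReal
              (if c ≤ v z then (deriv v z) ^ 2 / v z else 0)) :=
  pointwise_Linfty_estimate_general c v hv hpos hy
end

section
/- Let T > 0 and let θ : [0,T] × ℝ → ℝ be continuously differentiable. Define m(t) := inf_{x∈ℝ} θ(t,x) and suppose m(t) is finite for all t. Let t ∈ (0,T) be such that m is differentiable at t and the infimum is attained, i.e. there exists x_t ∈ ℝ with θ(t, x_t) = m(t). Then m′(t) = ∂_t θ(t, x_t). -/
open Set Filter Topology

/-!
Since `m s ≤ θ s x_t` for all `s` near `t`, with equality at `s = t`, the difference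
`s ↦ θ s x_t - m s` has a local minimum at `t`; Fermat's theorem makes its derivative vanish there.
-/

theorem HasDerivAt.eq_of_eventuallyLE_of_eq {f g : ℝ → ℝ} {f' g' a : ℝ}
    (hf : HasDerivAt f f' a) (hg : HasDerivAt g g' a)
    (hle : f ≤ᶠ[𝓝 a] g) (heq : f a = g a) : f' = g' := by
  have hmin : IsLocalMin (g - f) a := by
    filter_upwards [hle] with s hs
    simp only [Pi.sub_apply, heq, sub_self, sub_nonneg]
    exact hs
  have := hmin.hasDerivAt_eq_zero (hg.sub hf)
  linarith

theorem deriv_eq_of_eventuallyLE_of_eq {f g : ℝ → ℝ} {a : ℝ}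
    (hf : DifferentiableAt ℝ f a) (hg : DifferentiableAt ℝ g a)
    (hle : f ≤ᶠ[𝓝 a] g) (heq : f a = g a) : deriv f a = deriv g a :=
  hf.hasDerivAt.eq_of_eventuallyLE_of_eq hg.hasDerivAt hle heq

theorem differentiableAt_fst_of_contDiff_uncurry {θ : ℝ → ℝ → ℝ}
    (hθ : ContDiff ℝ 1 (fun p : ℝ × ℝ => θ p.1 p.2)) (x t : ℝ) :
    DifferentiableAt ℝ (fun s => θ s x) t :=
  (hθ.differentiable one_ne_zero).differentiableAt.comp t
    (differentiableAt_id.prodMk (differentiableAt_const x))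

theorem eventually_iInf_le_of_bddBelow {θ : ℝ → ℝ → ℝ} {S : Set ℝ} {t : ℝ} (hS : S ∈ 𝓝 t)
    (hbdd : ∀ s ∈ S, BddBelow (range (θ s))) (x : ℝ) :
    ∀ᶠ s in 𝓝 t, ⨅ y, θ s y ≤ θ s x :=
  eventually_of_mem hS fun s hs => ciInf_le (hbdd s hs) x

theorem deriv_of_inf_eq_partial_deriv_general (T : ℝ)
    (θ : ℝ → ℝ → ℝ) (hθ : ContDiff ℝ 1 (fun p : ℝ × ℝ => θ p.1 p.2))
    (m : ℝ → ℝ) (hm : ∀ t, m t = ⨅ x : ℝ, θ t x)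
    (hbdd : ∀ t ∈ Icc (0 : ℝ) T, BddBelow (Set.range (θ t)))
    (t : ℝ) (ht : t ∈ Ioo (0 : ℝ) T)
    (hdiff : DifferentiableAt ℝ m t)
    (x_t : ℝ) (hx : θ t x_t = m t) :
    deriv m t = deriv (fun s => θ s x_t) t := by
  have hIcc : Icc 0 T ∈ 𝓝 t := mem_of_superset (isOpen_Ioo.mem_nhds ht) Ioo_subset_Icc_self
  have hle : m ≤ᶠ[𝓝 t] fun s => θ s x_t := by
    filter_upwards [eventually_iInf_le_of_bddBelow hIcc hbdd x_t] with s hs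
    rwa [hm]
  exact deriv_eq_of_eventuallyLE_of_eq hdiff (differentiableAt_fst_of_contDiff_uncurry hθ x_t t)
    hle hx.symm

/-- if `θ` is `C¹`, `m(t) = inf_x θ(t,x)` is finite, `m` is
differentiable at `t ∈ (0,T)` and the infimum is attained at `x_t`, then
`m′(t) = ∂_t θ(t, x_t)`. -/
theorem deriv_of_inf_eq_partial_deriv (T : ℝ) (hT : 0 < T)
    (θ : ℝ → ℝ → ℝ) (hθ : ContDiff ℝ 1 (fun p : ℝ × ℝ => θ p.1 p.2))
    (m : ℝ → ℝ) (hm : ∀ t, m t = ⨅ x : ℝ, θ t x)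
    (hbdd : ∀ t ∈ Icc (0 : ℝ) T, BddBelow (Set.range (θ t)))
    (t : ℝ) (ht : t ∈ Ioo (0 : ℝ) T)
    (hdiff : DifferentiableAt ℝ m t)
    (x_t : ℝ) (hx : θ t x_t = m t) :
    deriv m t = deriv (fun s => θ s x_t) t :=
  deriv_of_inf_eq_partial_deriv_general T θ hθ m hm hbdd t ht hdiff x_t hx
end
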